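/- arXiv:1902.05921 — 2 statements merged into one kernel-verified Lean document; each statement's English description precedes it below -/
import Mathlib

section
/- Let v ∈ H¹(Ω;ℝ²) be divergence-free and u ∈ H²(Ω;ℝ³) on the 2D torus. Then ∫_Ω v · div(∇u ⊙ ∇u) dx + ∫_Ω ∇u · ∇(v·∇u) dx = 0, where the second integrand is Σ_{α,i} ∂_α u^i ∂_α (Σ_j v^j ∂_j u^i). -/
/-! When `div v = 0`, the sum of the two integrands is the divergence `∑ⱼ ∂ⱼFⱼ` of the flux
`Fⱼ = ∑ᵢ vᵢ ⟨∂ⱼu, ∂ᵢu⟩ + ½ vⱼ |∇u|²`. Indeed, the product rule splits `∂ⱼFⱼ` into the first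
integrand, `∂ⱼvᵢ ⟨∂ⱼu, ∂ᵢu⟩ + ½ vⱼ ∂ⱼ|∇u|²`, and `½ (div v) |∇u|² = 0`; by the symmetry of second
derivatives `½ vⱼ ∂ⱼ|∇u|² = vⱼ ⟨∂_α u, ∂_α ∂ⱼu⟩`, so the middle part is the second integrand.
The integral over the cell of the divergence of a periodic `C¹` field vanishes by the divergence
theorem: the fluxes through opposite faces cancel. -/

open MeasureTheory

noncomputable section

/-- The standard fundamental cell `(0,1)²` of the two-dimensional torus. -/
def Torus : Set (EuclideanSpace ℝ (Fin 2)) := {x | ∀ i : Fin 2, x i ∈ Set.Ioo (0 : ℝ) 1}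

/-- `f` is `1`-periodic in each coordinate direction. -/
def IsPer {F : Type*} (f : EuclideanSpace ℝ (Fin 2) → F) : Prop :=
  ∀ (x : EuclideanSpace ℝ (Fin 2)) (i : Fin 2), f (x + EuclideanSpace.single i 1) = f x

/-- Directional derivative `∂_α u`. -/
def pd {F : Type*} [NormedAddCommGroup F] [NormedSpace ℝ F]
    (α : Fin 2) (u : EuclideanSpace ℝ (Fin 2) → F) (x : EuclideanSpace ℝ (Fin 2)) : F :=
  fderiv ℝ u x (EuclideanSpace.single α 1)

open scoped InnerProductSpace

local notation "ℝ²" => EuclideanSpace ℝ (Fin 2)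

section PartialDerivative

variable {F : Type*} [NormedAddCommGroup F] [NormedSpace ℝ F] {x : ℝ²} (j : Fin 2)

lemma pd_add {g h : ℝ² → F} (hg : DifferentiableAt ℝ g x) (hh : DifferentiableAt ℝ h x) :
    pd j (fun y => g y + h y) x = pd j g x + pd j h x := by
  simp [pd, fderiv_fun_add hg hh]

lemma pd_sum {ι : Type*} (s : Finset ι) {g : ι → ℝ² → F}
    (hg : ∀ i ∈ s, DifferentiableAt ℝ (g i) x) :
    pd j (fun y => ∑ i ∈ s, g i y) x = ∑ i ∈ s, pd j (g i) x := by
  simp [pd, fderiv_fun_sum hg]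

lemma pd_smul {f : ℝ² → ℝ} {g : ℝ² → F} (hf : DifferentiableAt ℝ f x)
    (hg : DifferentiableAt ℝ g x) :
    pd j (fun y => f y • g y) x = pd j f x • g x + f x • pd j g x := by
  simp [pd, fderiv_fun_smul hf hg, add_comm]

lemma pd_mul {f g : ℝ² → ℝ} (hf : DifferentiableAt ℝ f x) (hg : DifferentiableAt ℝ g x) :
    pd j (fun y => f y * g y) x = pd j f x * g x + f x * pd j g x :=
  pd_smul j hf hg

lemma pd_const_mul (c : ℝ) {f : ℝ² → ℝ} (hf : DifferentiableAt ℝ f x) :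
    pd j (fun y => c * f y) x = c * pd j f x := by
  simp [pd, fderiv_const_mul hf c]

lemma pd_inner {G : Type*} [NormedAddCommGroup G] [InnerProductSpace ℝ G] {g h : ℝ² → G}
    (hg : DifferentiableAt ℝ g x) (hh : DifferentiableAt ℝ h x) :
    pd j (fun y => ⟪g y, h y⟫_ℝ) x = ⟪g x, pd j h x⟫_ℝ + ⟪pd j g x, h x⟫_ℝ :=
  fderiv_inner_apply ℝ hg hh _

lemma ContDiff.pd {m n : WithTop ℕ∞} {g : ℝ² → F} (hg : ContDiff ℝ n g) (hmn : m + 1 ≤ n) :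
    ContDiff ℝ m (pd j g) :=
  (hg.fderiv_right hmn).clm_apply contDiff_const

lemma ContDiff.continuous_pd {g : ℝ² → F} (hg : ContDiff ℝ 1 g) : Continuous (_root_.pd j g) :=
  (hg.pd j (zero_add 1).le).continuous

lemma pd_pd_comm {g : ℝ² → F} (hg : ContDiff ℝ 2 g) (i : Fin 2) :
    pd i (pd j g) x = pd j (pd i g) x := by
  have hsnd : ∀ k l : Fin 2, pd k (pd l g) x
      = fderiv ℝ (fderiv ℝ g) x (EuclideanSpace.single k 1) (EuclideanSpace.single l 1) := by
    intro k l
    have hDg : DifferentiableAt ℝ (fderiv ℝ g) x :=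
      (hg.fderiv_right (m := 1) le_rfl).differentiable one_ne_zero x
    change fderiv ℝ (fun y => fderiv ℝ g y _) x _ = _
    simp [fderiv_clm_apply hDg (differentiableAt_const _)]
  rw [hsnd, hsnd, (hg.contDiffAt.isSymmSndFDerivAt (by simp)).eq]

lemma IsPer.pd {g : ℝ² → F} (hg : IsPer g) : IsPer (pd j g) := by
  intro x i
  simp only [_root_.pd, ← fderiv_comp_add_right, hg _ i]

end PartialDerivative

section TorusIntegral

variable {E : Type*} [NormedAddCommGroup E]

lemma torus_subset_toLp_image_Icc : Torus ⊆ WithLp.toLp 2 '' Set.Icc (0 : Fin 2 → ℝ) 1 :=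
  fun x hx => ⟨x.ofLp, ⟨fun i => (hx i).1.le, fun i => (hx i).2.le⟩, rfl⟩

lemma Continuous.integrableOn_torus {f : ℝ² → E} (hf : Continuous f) : IntegrableOn f Torus :=
  (hf.continuousOn.integrableOn_compact
    (isCompact_Icc.image (PiLp.continuous_toLp 2 _))).mono_set torus_subset_toLp_image_Icc

variable [NormedSpace ℝ E]

lemma setIntegral_torus_eq_integral_Icc (f : ℝ² → E) :
    ∫ x in Torus, f x = ∫ y in Set.Icc (0 : Fin 2 → ℝ) 1, f (WithLp.toLp 2 y) := by
  have hpre : WithLp.toLp 2 ⁻¹' Torus = Set.univ.pi fun _ : Fin 2 => Set.Ioo (0 : ℝ) 1 := by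
    ext y
    simp [Torus, Set.mem_pi]
  rw [← (PiLp.volume_preserving_toLp (Fin 2)).setIntegral_preimage_emb
    (MeasurableEquiv.toLp 2 (Fin 2 → ℝ)).measurableEmbedding, hpre]
  exact setIntegral_congr_set Measure.univ_pi_Ioo_ae_eq_Icc

lemma Fin.insertNth_eq_insertNth_zero_add_single {M : Type*} [AddMonoid M] {n : ℕ}
    (i : Fin (n + 1)) (a : M) (y : Fin n → M) :
    (Fin.insertNth i a y : Fin (n + 1) → M) = Fin.insertNth i (0 : M) y + Pi.single i a := by
  ext k
  refine Fin.succAboveCases i ?_ (fun l => ?_) k <;> simp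

theorem integral_torus_sum_pd_eq_zero {F : Fin 2 → ℝ² → E} (hF : ∀ j, ContDiff ℝ 1 (F j))
    (hper : ∀ j, IsPer (F j)) : ∫ x in Torus, ∑ j, pd j (F j) x = 0 := by
  set ψ : (Fin 2 → ℝ) →L[ℝ] ℝ² := ↑(EuclideanSpace.equiv (Fin 2) ℝ).symm
  have hdiff : ∀ j, Differentiable ℝ (F j) := fun j => (hF j).differentiable one_ne_zero
  rw [setIntegral_torus_eq_integral_Icc]
  refine (integral_divergence_of_hasFDerivAt_off_countable' (n := 1) (0 : Fin 2 → ℝ) 1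
    (fun i => by norm_num) (fun i y => F i (ψ y)) (fun i y => (fderiv ℝ (F i) (ψ y)).comp ψ)
    ∅ Set.countable_empty (fun i => ((hF i).continuous.comp ψ.continuous).continuousOn)
    (fun y _ i => (hdiff i (ψ y)).hasFDerivAt.comp y ψ.hasFDerivAt)
    (Continuous.integrableOn_Icc (continuous_finsetSum _ fun i _ =>
      (((hF i).continuous_fderiv one_ne_zero).comp ψ.continuous).clm_apply
        continuous_const))).trans (Finset.sum_eq_zero fun i _ => sub_eq_zero.2 ?_)
  refine setIntegral_congr_fun measurableSet_Icc fun y _ => ?_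
  simp only [Pi.one_apply, Pi.zero_apply,
    Fin.insertNth_eq_insertNth_zero_add_single _ (1 : ℝ), map_add]
  exact hper i _ i

end TorusIntegral

section Coupling

variable {F : Type*} [NormedAddCommGroup F] [InnerProductSpace ℝ F]
  {v : ℝ² → Fin 2 → ℝ} {u : ℝ² → F} {x : ℝ²}

def couplingFlux (v : ℝ² → Fin 2 → ℝ) (u : ℝ² → F) (j : Fin 2) : ℝ² → ℝ :=
  fun y => ∑ i, v y i * ⟪pd j u y, pd i u y⟫_ℝ + 2⁻¹ * (v y j * ∑ α, ⟪pd α u y, pd α u y⟫_ℝ)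

lemma IsPer.couplingFlux (hv : IsPer v) (hu : IsPer u) (j : Fin 2) :
    IsPer (couplingFlux v u j) := by
  intro x i
  simp only [_root_.couplingFlux, hv x i, (hu.pd _) x i]

lemma ContDiff.couplingFlux (hv : ContDiff ℝ 1 v) (hu : ContDiff ℝ 2 u) (j : Fin 2) :
    ContDiff ℝ 1 (couplingFlux v u j) := by
  have hvi : ∀ i, ContDiff ℝ 1 (fun y => v y i) := contDiff_pi.1 hv
  have hpdu : ∀ α, ContDiff ℝ 1 (_root_.pd α u) := fun α => hu.pd α one_add_one_eq_two.le
  exact (ContDiff.sum fun i _ => (hvi i).mul ((hpdu j).inner ℝ (hpdu i))).add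
    (contDiff_const.mul ((hvi j).mul (ContDiff.sum fun α _ => (hpdu α).inner ℝ (hpdu α))))

lemma differentiableAt_pd (hu : ContDiff ℝ 2 u) (α : Fin 2) : DifferentiableAt ℝ (pd α u) x :=
  (hu.pd α one_add_one_eq_two.le).differentiable one_ne_zero x

lemma differentiableAt_inner_pd (hu : ContDiff ℝ 2 u) (α β : Fin 2) :
    DifferentiableAt ℝ (fun y => ⟪pd α u y, pd β u y⟫_ℝ) x :=
  (differentiableAt_pd hu α).inner ℝ (differentiableAt_pd hu β)

lemma pd_sum_inner_self (hu : ContDiff ℝ 2 u) (j : Fin 2) :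
    pd j (fun y => ∑ α, ⟪pd α u y, pd α u y⟫_ℝ) x = ∑ α, 2 * ⟪pd α u x, pd j (pd α u) x⟫_ℝ := by
  rw [pd_sum j _ fun α _ => differentiableAt_inner_pd hu α α]
  refine Finset.sum_congr rfl fun α _ => ?_
  rw [pd_inner j (differentiableAt_pd hu α) (differentiableAt_pd hu α), real_inner_comm (pd j _ x)]
  ring

lemma pd_couplingFlux (hv : ContDiff ℝ 1 v) (hu : ContDiff ℝ 2 u) (j : Fin 2) :
    pd j (couplingFlux v u j) x =
      ∑ i, (pd j (fun y => v y i) x * ⟪pd j u x, pd i u x⟫_ℝ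
        + v x i * pd j (fun y => ⟪pd j u y, pd i u y⟫_ℝ) x)
      + 2⁻¹ * (pd j (fun y => v y j) x * ∑ α, ⟪pd α u x, pd α u x⟫_ℝ
        + v x j * ∑ α, 2 * ⟪pd α u x, pd j (pd α u) x⟫_ℝ) := by
  have hdv : ∀ i, DifferentiableAt ℝ (fun y => v y i) x :=
    differentiableAt_pi.1 (hv.differentiable one_ne_zero x)
  have hdS : DifferentiableAt ℝ (fun y => ∑ α, ⟪pd α u y, pd α u y⟫_ℝ) x :=
    DifferentiableAt.fun_sum fun α _ => differentiableAt_inner_pd hu α α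
  have hdA : ∀ i, DifferentiableAt ℝ (fun y => v y i * ⟪pd j u y, pd i u y⟫_ℝ) x :=
    fun i => (hdv i).mul (differentiableAt_inner_pd hu j i)
  have hdB : DifferentiableAt ℝ (fun y => v y j * ∑ α, ⟪pd α u y, pd α u y⟫_ℝ) x :=
    (hdv j).mul hdS
  unfold couplingFlux
  rw [pd_add j (DifferentiableAt.fun_sum fun i _ => hdA i) (hdB.const_mul 2⁻¹),
    pd_sum j _ fun i _ => hdA i, pd_const_mul j _ hdB, pd_mul j (hdv j) hdS,
    pd_sum_inner_self hu]
  simp only [pd_mul j (hdv _) (differentiableAt_inner_pd hu j _)]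

lemma inner_pd_pd_sum_smul (hv : ContDiff ℝ 1 v) (hu : ContDiff ℝ 2 u) (α : Fin 2) :
    ⟪pd α u x, pd α (fun y => ∑ j, v y j • pd j u y) x⟫_ℝ =
      ∑ j, (pd α (fun y => v y j) x * ⟪pd α u x, pd j u x⟫_ℝ
        + v x j * ⟪pd α u x, pd j (pd α u) x⟫_ℝ) := by
  have hdv : ∀ i, DifferentiableAt ℝ (fun y => v y i) x :=
    differentiableAt_pi.1 (hv.differentiable one_ne_zero x)
  rw [pd_sum α (g := fun j y => v y j • pd j u y) _
    fun j _ => (hdv j).smul (differentiableAt_pd hu j), inner_sum]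
  refine Finset.sum_congr rfl fun j _ => ?_
  rw [pd_smul α (hdv j) (differentiableAt_pd hu j), inner_add_right, real_inner_smul_right,
    real_inner_smul_right, pd_pd_comm α hu j]

lemma sum_pd_couplingFlux (hv : ContDiff ℝ 1 v) (hu : ContDiff ℝ 2 u)
    (hdiv : ∑ i, pd i (fun y => v y i) x = 0) :
    ∑ j, pd j (couplingFlux v u j) x =
      ∑ i, v x i * ∑ j, pd j (fun y => ⟪pd j u y, pd i u y⟫_ℝ) x
        + ∑ α, ⟪pd α u x, pd α (fun y => ∑ j, v y j • pd j u y) x⟫_ℝ := by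
  simp only [pd_couplingFlux hv hu, inner_pd_pd_sum_smul hv hu]
  simp only [Fin.sum_univ_two] at hdiv ⊢
  linear_combination (2⁻¹ * (⟪pd 0 u x, pd 0 u x⟫_ℝ + ⟪pd 1 u x, pd 1 u x⟫_ℝ)) * hdiv

end Coupling

/-- Coupling cancellation: for `v` divergence-free periodic `H¹` (here `C¹`) and
`u ∈ H²` (here `C²`) on the 2D torus:
`∫ v · div(∇u ⊙ ∇u) dx + ∫ ∇u · ∇(v·∇u) dx = 0`. -/
theorem coupling_cancellation
    (v : EuclideanSpace ℝ (Fin 2) → Fin 2 → ℝ)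
    (u : EuclideanSpace ℝ (Fin 2) → EuclideanSpace ℝ (Fin 3))
    (hv : ContDiff ℝ 1 v) (hvper : IsPer v)
    (hdiv : ∀ x, ∑ i : Fin 2, fderiv ℝ (fun y => v y i) x (EuclideanSpace.single i 1) = 0)
    (hu : ContDiff ℝ 2 u) (huper : IsPer u) :
    (∫ x in Torus,
        ∑ i : Fin 2, v x i *
          ∑ j : Fin 2, fderiv ℝ (fun y => inner (𝕜 := ℝ) (pd j u y) (pd i u y)) x
            (EuclideanSpace.single j 1))
      + (∫ x in Torus,
          ∑ α : Fin 2, inner (𝕜 := ℝ) (pd α u x)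
            (fderiv ℝ (fun y => ∑ j : Fin 2, v y j • pd j u y) x
              (EuclideanSpace.single α 1))) = 0 := by
  have hvi : ∀ i, ContDiff ℝ 1 (fun y => v y i) := contDiff_pi.1 hv
  have hpdu : ∀ α, ContDiff ℝ 1 (pd α u) := fun α => hu.pd α one_add_one_eq_two.le
  have hI₁ : Continuous fun x => ∑ i, v x i * ∑ j, pd j (fun y => ⟪pd j u y, pd i u y⟫_ℝ) x :=
    continuous_finsetSum _ fun i _ => (hvi i).continuous.mul <|
      continuous_finsetSum _ fun j _ => ((hpdu j).inner ℝ (hpdu i)).continuous_pd j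
  have hI₂ : Continuous fun x => ∑ α, ⟪pd α u x, pd α (fun y => ∑ j, v y j • pd j u y) x⟫_ℝ :=
    continuous_finsetSum _ fun α _ => (hpdu α).continuous.inner <|
      (ContDiff.sum fun j _ => (hvi j).smul (hpdu j)).continuous_pd α
  calc _ = ∫ x in Torus, ((∑ i, v x i * ∑ j, pd j (fun y => ⟪pd j u y, pd i u y⟫_ℝ) x)
          + ∑ α, ⟪pd α u x, pd α (fun y => ∑ j, v y j • pd j u y) x⟫_ℝ) :=
        (integral_add hI₁.integrableOn_torus hI₂.integrableOn_torus).symm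
    _ = ∫ x in Torus, ∑ j, pd j (couplingFlux v u j) x :=
        integral_congr_ae (ae_of_all _ fun x => (sum_pd_couplingFlux hv hu (hdiv x)).symm)
    _ = 0 := integral_torus_sum_pd_eq_zero (fun j => hv.couplingFlux hu j)
        (fun j => hvper.couplingFlux huper j)

end
end

section
/- Let v ∈ H²(Ω;ℝ²) be divergence-free on the 2D torus. Then ∫_Ω Δv · (v·∇v) dx = 0. -/
/-!
Write `A = ∇v` (so `A j k = ∂ₖ vⱼ`) and `g = |∇v|²`. The product rule and the symmetry of second
derivatives give, in any dimension, the divergence identity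
`div Φ = Δv · (v·∇v) + tr(A² Aᵀ) - ½ (div v) g`,  where  `Φₖ = ∑ⱼ ∂ₖvⱼ (v·∇vⱼ) - ½ vₖ g`.
If `v` is divergence-free and planar, `A` is a traceless `2 × 2` matrix, so `A² = -(det A) I` by
Cayley–Hamilton and `tr(A² Aᵀ) = -(det A) tr A = 0`. The integrand is therefore the divergence of
a periodic field, and its integral over a period cell vanishes: in the divergence theorem the
fluxes through opposite faces cancel.
-/

open MeasureTheory

noncomputable section

noncomputable def lapComp (v : EuclideanSpace ℝ (Fin 2) → Fin 2 → ℝ) (j : Fin 2)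
    (x : EuclideanSpace ℝ (Fin 2)) : ℝ :=
  ∑ α : Fin 2,
    fderiv ℝ (fun y => fderiv ℝ (fun z => v z j) y (EuclideanSpace.single α 1)) x
      (EuclideanSpace.single α 1)

open Set
open scoped Matrix

section PartialDeriv

variable {ι : Type*} [Fintype ι] [DecidableEq ι]

def partialDeriv (f : EuclideanSpace ℝ ι → ℝ) (i : ι) (x : EuclideanSpace ℝ ι) : ℝ :=
  fderiv ℝ f x (EuclideanSpace.single i 1)

variable {f g : EuclideanSpace ℝ ι → ℝ} {x : EuclideanSpace ℝ ι}

theorem ContDiff.partialDeriv {n : WithTop ℕ∞} (hf : ContDiff ℝ (n + 1) f) (i : ι) :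
    ContDiff ℝ n (partialDeriv f i) :=
  (hf.fderiv_right le_rfl).clm_apply contDiff_const

theorem partialDeriv_mul (hf : DifferentiableAt ℝ f x) (hg : DifferentiableAt ℝ g x) (i : ι) :
    partialDeriv (fun y => f y * g y) i x =
      partialDeriv f i x * g x + f x * partialDeriv g i x := by
  simp only [partialDeriv, fderiv_fun_mul hf hg, FunLike.coe_add, FunLike.coe_smul, Pi.add_apply,
    Pi.smul_apply, smul_eq_mul]
  ring

theorem partialDeriv_const_mul (hf : DifferentiableAt ℝ f x) (c : ℝ) (i : ι) :
    partialDeriv (fun y => c * f y) i x = c * partialDeriv f i x := by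
  simp [partialDeriv, fderiv_const_mul hf]

theorem partialDeriv_sub (hf : DifferentiableAt ℝ f x) (hg : DifferentiableAt ℝ g x) (i : ι) :
    partialDeriv (fun y => f y - g y) i x = partialDeriv f i x - partialDeriv g i x := by
  simp [partialDeriv, fderiv_fun_sub hf hg]

theorem partialDeriv_sum {κ : Type*} {s : Finset κ} {F : κ → EuclideanSpace ℝ ι → ℝ}
    (hF : ∀ k ∈ s, DifferentiableAt ℝ (F k) x) (i : ι) :
    partialDeriv (fun y => ∑ k ∈ s, F k y) i x = ∑ k ∈ s, partialDeriv (F k) i x := by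
  simp [partialDeriv, fderiv_fun_sum hF]

theorem partialDeriv_comm (hf : ContDiff ℝ 2 f) (i j : ι) :
    partialDeriv (partialDeriv f i) j x = partialDeriv (partialDeriv f j) i x := by
  have hdiff : DifferentiableAt ℝ (fderiv ℝ f) x :=
    (hf.fderiv_right (m := 1) (by norm_num)).differentiable one_ne_zero x
  have hsecond : ∀ v w : EuclideanSpace ℝ ι,
      fderiv ℝ (fun y => fderiv ℝ f y v) x w = fderiv ℝ (fderiv ℝ f) x w v := fun v w => by
    simp [fderiv_clm_apply hdiff (differentiableAt_const v)]
  change fderiv ℝ (fun y => fderiv ℝ f y _) x _ = fderiv ℝ (fun y => fderiv ℝ f y _) x _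
  rw [hsecond, hsecond]
  exact hf.contDiffAt.isSymmSndFDerivAt (by simp) _ _

end PartialDeriv

theorem IsPer.partialDeriv {f : EuclideanSpace ℝ (Fin 2) → ℝ} (hf : IsPer f) (i : Fin 2) :
    IsPer (partialDeriv f i) := by
  intro x k
  have hshift : (fun y => f (y + EuclideanSpace.single k 1)) = f := funext fun y => hf y k
  change fderiv ℝ f (x + _) _ = fderiv ℝ f x _
  rw [← fderiv_comp_add_right, hshift]

theorem integral_Icc_divergence_eq_zero_of_periodic {n : ℕ}
    (Φ : Fin (n + 1) → (Fin (n + 1) → ℝ) → ℝ) (hΦ : ∀ i, Differentiable ℝ (Φ i))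
    (hper : ∀ i x, Φ i (x + Pi.single i 1) = Φ i x)
    (hint : IntegrableOn (fun x => ∑ i, fderiv ℝ (Φ i) x (Pi.single i 1)) (Icc 0 1)) :
    ∫ x in Icc (0 : Fin (n + 1) → ℝ) 1, ∑ i, fderiv ℝ (Φ i) x (Pi.single i 1) = 0 := by
  rw [integral_divergence_of_hasFDerivAt_off_countable' 0 1 zero_le_one Φ
    (fun i => fderiv ℝ (Φ i)) ∅ countable_empty (fun i => (hΦ i).continuous.continuousOn)
    (fun x _ i => (hΦ i x).hasFDerivAt) hint]
  refine Finset.sum_eq_zero fun i _ => sub_eq_zero.2 (setIntegral_congr_fun measurableSet_Icc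
    fun x _ => ?_)
  have hface :
      (i.insertNth (1 : ℝ) x : Fin (n + 1) → ℝ) = i.insertNth (0 : ℝ) x + Pi.single i 1 := by
    ext j
    refine Fin.succAboveCases i ?_ (fun k => ?_) j <;> simp
  simp only [Pi.one_apply, Pi.zero_apply, hface, hper]

theorem integral_torus_divergence_eq_zero (Φ : Fin 2 → EuclideanSpace ℝ (Fin 2) → ℝ)
    (hΦ : ∀ i, ContDiff ℝ 1 (Φ i)) (hper : ∀ i, IsPer (Φ i)) :
    ∫ x in Torus, ∑ i, partialDeriv (Φ i) i x = 0 := by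
  let L := (PiLp.continuousLinearEquiv 2 ℝ fun _ : Fin 2 => ℝ).symm
  have hpartial : ∀ i y,
      partialDeriv (Φ i) i (WithLp.toLp 2 y) = fderiv ℝ (Φ i ∘ L) y (Pi.single i 1) :=
    fun i y => by rw [L.comp_right_fderiv]; rfl
  have hcell : WithLp.toLp 2 ⁻¹' Torus = univ.pi fun _ => Ioo (0 : ℝ) 1 := by
    ext y; simp [Torus]
  rw [← (PiLp.volume_preserving_toLp (Fin 2)).setIntegral_preimage_emb
    (MeasurableEquiv.toLp 2 _).measurableEmbedding, hcell, volume_pi,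
    setIntegral_congr_set Measure.univ_pi_Ioo_ae_eq_Icc, ← volume_pi]
  simp only [hpartial]
  have hΦL : ∀ i, ContDiff ℝ 1 (Φ i ∘ L) := fun i => (hΦ i).comp L.contDiff
  refine integral_Icc_divergence_eq_zero_of_periodic (fun i => Φ i ∘ L)
    (fun i => (hΦL i).differentiable one_ne_zero) (fun i y => ?_) ?_
  · simp only [Function.comp_apply, map_add]
    exact hper i _ i
  · refine (continuous_finsetSum _ fun i _ => ?_).continuousOn.integrableOn_compact isCompact_Icc
    exact ((hΦL i).continuous_fderiv one_ne_zero).clm_apply continuous_const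

theorem Matrix.mul_self_eq_neg_det_smul_one_of_trace_eq_zero {R : Type*} [CommRing R]
    [Nontrivial R] {A : Matrix (Fin 2) (Fin 2) R} (hA : A.trace = 0) : A * A = -(A.det • 1) := by
  have hCH := A.aeval_self_charpoly
  rw [A.charpoly_fin_two, hA] at hCH
  simp only [map_add, map_pow, Polynomial.aeval_X, Polynomial.aeval_C, map_zero, zero_mul,
    sub_zero, Algebra.algebraMap_eq_smul_one] at hCH
  rw [← sq]
  exact eq_neg_of_add_eq_zero_left hCH

theorem Matrix.trace_mul_self_mul_transpose_eq_zero {R : Type*} [CommRing R] [Nontrivial R]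
    {A : Matrix (Fin 2) (Fin 2) R} (hA : A.trace = 0) : (A * A * Aᵀ).trace = 0 := by
  rw [Matrix.mul_self_eq_neg_det_smul_one_of_trace_eq_zero hA, neg_mul, Matrix.smul_mul,
    one_mul, Matrix.trace_neg, Matrix.trace_smul, Matrix.trace_transpose, hA, smul_zero, neg_zero]

section VectorField

variable {ι : Type*} [Fintype ι] [DecidableEq ι] {v : EuclideanSpace ℝ ι → ι → ℝ}

def velocityGrad (v : EuclideanSpace ℝ ι → ι → ℝ) (j i : ι) : EuclideanSpace ℝ ι → ℝ :=
  partialDeriv (fun z => v z j) i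

def gradMatrix (v : EuclideanSpace ℝ ι → ι → ℝ) (x : EuclideanSpace ℝ ι) : Matrix ι ι ℝ :=
  Matrix.of fun j i => velocityGrad v j i x

def convectiveTerm (v : EuclideanSpace ℝ ι → ι → ℝ) (j : ι) (x : EuclideanSpace ℝ ι) : ℝ :=
  ∑ i, v x i * velocityGrad v j i x

def gradNormSq (v : EuclideanSpace ℝ ι → ι → ℝ) (x : EuclideanSpace ℝ ι) : ℝ :=
  ∑ j, ∑ i, velocityGrad v j i x * velocityGrad v j i x

def laplacianConvectionFlux (v : EuclideanSpace ℝ ι → ι → ℝ) (k : ι) (x : EuclideanSpace ℝ ι) : ℝ :=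
  ∑ j, velocityGrad v j k x * convectiveTerm v j x - 2⁻¹ * (v x k * gradNormSq v x)

theorem contDiff_velocityGrad (hv : ContDiff ℝ 2 v) (j i : ι) :
    ContDiff ℝ 1 (velocityGrad v j i) :=
  (contDiff_pi.1 hv j).partialDeriv (n := 1) i

theorem contDiff_convectiveTerm (hv : ContDiff ℝ 2 v) (j : ι) :
    ContDiff ℝ 1 (convectiveTerm v j) :=
  ContDiff.sum fun i _ => (contDiff_pi.1 (hv.of_le one_le_two) i).mul (contDiff_velocityGrad hv j i)

theorem contDiff_gradNormSq (hv : ContDiff ℝ 2 v) : ContDiff ℝ 1 (gradNormSq v) :=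
  ContDiff.sum fun j _ => ContDiff.sum fun i _ =>
    (contDiff_velocityGrad hv j i).mul (contDiff_velocityGrad hv j i)

theorem contDiff_laplacianConvectionFlux (hv : ContDiff ℝ 2 v) (k : ι) :
    ContDiff ℝ 1 (laplacianConvectionFlux v k) :=
  (ContDiff.sum fun j _ => (contDiff_velocityGrad hv j k).mul (contDiff_convectiveTerm hv j)).sub
    (contDiff_const.mul ((contDiff_pi.1 (hv.of_le one_le_two) k).mul (contDiff_gradNormSq hv)))

theorem partialDeriv_convectiveTerm (hv : ContDiff ℝ 2 v) (j k : ι) (x : EuclideanSpace ℝ ι) :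
    partialDeriv (convectiveTerm v j) k x =
      ∑ i, (velocityGrad v i k x * velocityGrad v j i x +
        v x i * partialDeriv (velocityGrad v j k) i x) := by
  have hvi : ∀ i, DifferentiableAt ℝ (fun z => v z i) x := fun i =>
    (contDiff_pi.1 hv i).differentiable two_ne_zero x
  have hA : ∀ i, DifferentiableAt ℝ (velocityGrad v j i) x := fun i =>
    (contDiff_velocityGrad hv j i).differentiable one_ne_zero x
  unfold convectiveTerm
  rw [partialDeriv_sum fun i _ => (hvi i).fun_mul (hA i)]
  refine Finset.sum_congr rfl fun i _ => ?_
  rw [partialDeriv_mul (hvi i) (hA i)]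
  simp only [velocityGrad]
  rw [partialDeriv_comm (contDiff_pi.1 hv j)]

theorem partialDeriv_gradNormSq (hv : ContDiff ℝ 2 v) (k : ι) (x : EuclideanSpace ℝ ι) :
    partialDeriv (gradNormSq v) k x =
      2 * ∑ j, ∑ i, velocityGrad v j i x * partialDeriv (velocityGrad v j i) k x := by
  have hA : ∀ j i, DifferentiableAt ℝ (velocityGrad v j i) x := fun j i =>
    (contDiff_velocityGrad hv j i).differentiable one_ne_zero x
  unfold gradNormSq
  rw [partialDeriv_sum fun j _ => DifferentiableAt.fun_sum fun i _ => (hA j i).fun_mul (hA j i),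
    Finset.mul_sum]
  refine Finset.sum_congr rfl fun j _ => ?_
  rw [partialDeriv_sum fun i _ => (hA j i).fun_mul (hA j i), Finset.mul_sum]
  refine Finset.sum_congr rfl fun i _ => ?_
  rw [partialDeriv_mul (hA j i) (hA j i)]
  ring

theorem partialDeriv_laplacianConvectionFlux (hv : ContDiff ℝ 2 v) (k : ι)
    (x : EuclideanSpace ℝ ι) :
    partialDeriv (laplacianConvectionFlux v k) k x =
      ∑ j, (partialDeriv (velocityGrad v j k) k x * convectiveTerm v j x +
        velocityGrad v j k x * partialDeriv (convectiveTerm v j) k x) -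
      2⁻¹ * (velocityGrad v k k x * gradNormSq v x + v x k * partialDeriv (gradNormSq v) k x) := by
  have hvk : DifferentiableAt ℝ (fun z => v z k) x :=
    (contDiff_pi.1 hv k).differentiable two_ne_zero x
  have hA : ∀ j, DifferentiableAt ℝ (velocityGrad v j k) x := fun j =>
    (contDiff_velocityGrad hv j k).differentiable one_ne_zero x
  have hN : ∀ j, DifferentiableAt ℝ (convectiveTerm v j) x := fun j =>
    (contDiff_convectiveTerm hv j).differentiable one_ne_zero x
  have hg : DifferentiableAt ℝ (gradNormSq v) x :=
    (contDiff_gradNormSq hv).differentiable one_ne_zero x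
  unfold laplacianConvectionFlux
  rw [partialDeriv_sub (DifferentiableAt.fun_sum fun j _ => (hA j).fun_mul (hN j))
      ((hvk.fun_mul hg).const_mul _),
    partialDeriv_sum fun j _ => (hA j).fun_mul (hN j), partialDeriv_const_mul (hvk.fun_mul hg),
    partialDeriv_mul hvk hg]
  simp only [partialDeriv_mul (hA _) (hN _)]
  rfl

theorem trace_gradMatrix (x : EuclideanSpace ℝ ι) :
    (gradMatrix v x).trace = ∑ k, velocityGrad v k k x :=
  rfl

theorem trace_gradMatrix_mul_mul_transpose (x : EuclideanSpace ℝ ι) :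
    (gradMatrix v x * gradMatrix v x * (gradMatrix v x)ᵀ).trace =
      ∑ k, ∑ j, ∑ i, velocityGrad v j k x * (velocityGrad v i k x * velocityGrad v j i x) := by
  simp only [Matrix.trace, Matrix.diag, Matrix.mul_apply, Matrix.transpose_apply, gradMatrix,
    Matrix.of_apply, Finset.sum_mul]
  rw [Finset.sum_comm]
  exact Finset.sum_congr rfl fun _ _ => Finset.sum_congr rfl fun _ _ =>
    Finset.sum_congr rfl fun _ _ => by ring

theorem sum_velocityGrad_mul_partialDeriv_convectiveTerm (hv : ContDiff ℝ 2 v)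
    (x : EuclideanSpace ℝ ι) :
    ∑ k, ∑ j, velocityGrad v j k x * partialDeriv (convectiveTerm v j) k x =
      (gradMatrix v x * gradMatrix v x * (gradMatrix v x)ᵀ).trace +
        ∑ k, ∑ j, velocityGrad v j k x * ∑ i, v x i * partialDeriv (velocityGrad v j k) i x := by
  simp only [partialDeriv_convectiveTerm hv, trace_gradMatrix_mul_mul_transpose, mul_add,
    Finset.mul_sum, Finset.sum_add_distrib]

theorem sum_mul_partialDeriv_gradNormSq (hv : ContDiff ℝ 2 v) (x : EuclideanSpace ℝ ι) :
    ∑ k, v x k * partialDeriv (gradNormSq v) k x =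
      2 * ∑ k, ∑ j, velocityGrad v j k x * ∑ i, v x i * partialDeriv (velocityGrad v j k) i x := by
  simp only [partialDeriv_gradNormSq hv, Finset.mul_sum]
  rw [Finset.sum_comm_cycle]
  refine Finset.sum_congr rfl fun k _ => ?_
  rw [Finset.sum_comm]
  exact Finset.sum_congr rfl fun _ _ => Finset.sum_congr rfl fun _ _ => by ring

theorem sum_partialDeriv_laplacianConvectionFlux (hv : ContDiff ℝ 2 v) (x : EuclideanSpace ℝ ι) :
    ∑ k, partialDeriv (laplacianConvectionFlux v k) k x =
      ∑ j, (∑ k, partialDeriv (velocityGrad v j k) k x) * convectiveTerm v j x +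
        (gradMatrix v x * gradMatrix v x * (gradMatrix v x)ᵀ).trace -
        2⁻¹ * ((gradMatrix v x).trace * gradNormSq v x) := by
  calc ∑ k, partialDeriv (laplacianConvectionFlux v k) k x
      = ∑ k, ∑ j, partialDeriv (velocityGrad v j k) k x * convectiveTerm v j x +
          ∑ k, ∑ j, velocityGrad v j k x * partialDeriv (convectiveTerm v j) k x -
          2⁻¹ * (∑ k, velocityGrad v k k x * gradNormSq v x +
            ∑ k, v x k * partialDeriv (gradNormSq v) k x) := by
        simp only [partialDeriv_laplacianConvectionFlux hv, Finset.sum_sub_distrib,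
          Finset.sum_add_distrib, ← Finset.mul_sum]
    _ = _ := by
        rw [sum_velocityGrad_mul_partialDeriv_convectiveTerm hv, sum_mul_partialDeriv_gradNormSq hv,
          Finset.sum_comm, trace_gradMatrix]
        simp only [Finset.sum_mul]
        ring

end VectorField

theorem IsPer.laplacianConvectionFlux {v : EuclideanSpace ℝ (Fin 2) → Fin 2 → ℝ} (hv : IsPer v)
    (k : Fin 2) : IsPer (laplacianConvectionFlux v k) := by
  intro x i
  have hA : ∀ j l, velocityGrad v j l (x + EuclideanSpace.single i 1) = velocityGrad v j l x :=
    fun j l => (IsPer.partialDeriv (fun y m => congrFun (hv y m) j) l) x i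
  simp only [_root_.laplacianConvectionFlux, convectiveTerm, gradNormSq, hv x i, hA]

/-- For a divergence-free periodic `H²` (here `C²`) vector field `v` on the 2D torus:
`∫_Ω Δv · (v·∇v) dx = 0`. -/
theorem laplacian_convection_orthogonal
    (v : EuclideanSpace ℝ (Fin 2) → Fin 2 → ℝ)
    (hv : ContDiff ℝ 2 v) (hper : IsPer v)
    (hdiv : ∀ x, ∑ i : Fin 2, fderiv ℝ (fun y => v y i) x (EuclideanSpace.single i 1) = 0) :
    ∫ x in Torus,
        ∑ j : Fin 2, lapComp v j x *
          ∑ i : Fin 2, v x i * fderiv ℝ (fun y => v y j) x (EuclideanSpace.single i 1)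
      = 0 := by
  have hflux : ∀ x, ∑ j : Fin 2, lapComp v j x *
        ∑ i : Fin 2, v x i * fderiv ℝ (fun y => v y j) x (EuclideanSpace.single i 1) =
      ∑ k, partialDeriv (laplacianConvectionFlux v k) k x := by
    intro x
    have htrace : (gradMatrix v x).trace = 0 := hdiv x
    rw [sum_partialDeriv_laplacianConvectionFlux hv, htrace,
      Matrix.trace_mul_self_mul_transpose_eq_zero htrace, zero_mul, mul_zero, add_zero, sub_zero]
    rfl
  simp only [hflux]
  exact integral_torus_divergence_eq_zero _ (contDiff_laplacianConvectionFlux hv)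
    hper.laplacianConvectionFlux

end
end
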